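/- arXiv:math/0610923 — 2 statements merged into one kernel-verified Lean document; each statement's English description precedes it below -/
import Mathlib

section
/- Let g ≥ 1 and let R be the quotient of the Laurent polynomial ring ℤ[t,t⁻¹] by the principal ideal generated by (t + 2 + t⁻¹)^g. If P ∈ R satisfies P·P = d·P for some nonzero integer d, then P = 0 or P = d·1 in R. -/
/-!
Since `t + 2 + t⁻¹ = t⁻¹ (t + 1)²`, sending `t ↦ X` embeds `ℤ[t,t⁻¹]/((t + 2 + t⁻¹)^g)`
into `ℤ[X]/((X + 1)^(2g))`, a free `ℤ`-module in which `X + 1` is nilpotent. Evaluating at `X = -1`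
sends the image `Q` of `P` to a root of `x (x - d)` in `ℤ`, so `Q` or `d - Q` is nilpotent. A
nilpotent `Q` with `Q² = d Q` satisfies `d^m Q = Q^(m+1) = 0` for large `m`, hence `Q = 0` by
torsion-freeness.
-/

open LaurentPolynomial Polynomial

section TorsionFree

variable {S : Type*} [CommRing S] {d : ℤ} {Q : S}

theorem pow_succ_eq_of_mul_self_eq_intCast_mul (hQ : Q * Q = d * Q) (n : ℕ) :
    Q ^ (n + 1) = d ^ n * Q := by
  induction n with
  | zero => simp
  | succ n ih => rw [pow_succ, ih, mul_assoc, hQ, pow_succ]; ring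

theorem IsNilpotent.eq_zero_of_mul_self_eq_intCast_mul [IsAddTorsionFree S] (hd : d ≠ 0)
    (hQ : Q * Q = d * Q) (hnil : IsNilpotent Q) : Q = 0 := by
  obtain ⟨m, hm⟩ := hnil
  have : d ^ m • Q = 0 := by
    rw [zsmul_eq_mul, Int.cast_pow, ← pow_succ_eq_of_mul_self_eq_intCast_mul hQ,
      _root_.pow_succ, hm, zero_mul]
  exact (IsAddTorsionFree.zsmul_eq_zero_iff_right (pow_ne_zero m hd)).mp this

theorem eq_zero_or_eq_intCast_of_mul_self_eq_intCast_mul [IsAddTorsionFree S] {D : Type*}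
    [CommRing D] [NoZeroDivisors D] (φ : S →+* D) (hφ : ∀ s, φ s = 0 → IsNilpotent s)
    (hd : d ≠ 0) (hQ : Q * Q = d * Q) : Q = 0 ∨ Q = d := by
  have hQ' : (d - Q) * (d - Q) = d * (d - Q) := by linear_combination hQ
  have hφQ : φ Q * (φ Q - d) = 0 := by
    linear_combination (by simpa using congrArg φ hQ : φ Q * φ Q = d * φ Q)
  rcases mul_eq_zero.mp hφQ with h0 | hdiff
  · exact .inl (IsNilpotent.eq_zero_of_mul_self_eq_intCast_mul hd hQ (hφ Q h0))
  · refine .inr (sub_eq_zero.mp ?_).symm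
    refine IsNilpotent.eq_zero_of_mul_self_eq_intCast_mul hd hQ' (hφ _ ?_)
    rw [map_sub, map_intCast]; linear_combination -hdiff

end TorsionFree

theorem LaurentPolynomial.ringHom_ext {R S : Type*} [CommSemiring R] [Semiring S]
    {f g : R[T;T⁻¹] →+* S} (hC : ∀ r, f (C r) = g (C r)) (hT : f (T 1) = g (T 1)) :
    f = g := by
  refine IsLocalization.ringHom_ext (Submonoid.powers (X : R[X])) (Polynomial.ringHom_ext ?_ ?_)
  · simpa [algebraMap_eq_toLaurent, toLaurent_C] using hC
  · simpa [algebraMap_eq_toLaurent, toLaurent_X] using hT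

namespace AdjoinRoot

variable {R : Type*} [CommRing R] (a : R) (n : ℕ)

theorem root_sub_of_pow_eq_zero : (root ((X - Polynomial.C a) ^ n) - of _ a) ^ n = 0 := by
  rw [← mk_X, ← mk_C, ← map_sub, ← map_pow, mk_self]

theorem isNilpotent_root_sub_of : IsNilpotent (root ((X - Polynomial.C a) ^ n) - of _ a) :=
  ⟨n, root_sub_of_pow_eq_zero a n⟩

theorem isUnit_root_of_isUnit {a : R} (ha : IsUnit a) :
    IsUnit (root ((X - Polynomial.C a) ^ n)) := by
  simpa using (isNilpotent_root_sub_of a n).isUnit_add_right_of_commute (ha.map (of _))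
    (.all _ _)

variable {a n}

theorem isNilpotent_of_lift_id_eq_zero
    (h : ((X - Polynomial.C a) ^ n).eval₂ (RingHom.id R) a = 0)
    {s : AdjoinRoot ((X - Polynomial.C a) ^ n)} (hs : lift (RingHom.id R) a h s = 0) :
    IsNilpotent s := by
  obtain ⟨p, rfl⟩ := mk_surjective s
  rw [lift_mk] at hs
  obtain ⟨q, rfl⟩ := dvd_iff_isRoot.mpr hs
  exact ⟨n, by rw [← map_pow, mul_pow, map_mul, mk_self, zero_mul]⟩

end AdjoinRoot

theorem Polynomial.Monic.isAddTorsionFree_adjoinRoot {f : ℤ[X]} (hf : f.Monic) :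
    IsAddTorsionFree (AdjoinRoot f) :=
  have := hf.free_adjoinRoot
  Module.isTorsionFree_int_iff_isAddTorsionFree.mp inferInstance

namespace LaurentPolynomial

variable (R : Type*) [CommRing R] (g : ℕ)

theorem T_one_add_one_sq : (T 1 + 1 : R[T;T⁻¹]) ^ 2 = T 1 * (T 1 + 2 + T (-1)) := by
  have h : (T 1 * T (-1) : R[T;T⁻¹]) = 1 := by rw [← T_add]; simp
  linear_combination -h

noncomputable def toAdjoinRoot :
    R[T;T⁻¹] →+* AdjoinRoot ((X - Polynomial.C (-1 : R)) ^ (2 * g)) :=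
  eval₂ (AdjoinRoot.of _) (AdjoinRoot.isUnit_root_of_isUnit _ isUnit_one.neg).unit

variable {R g}

@[simp]
theorem toAdjoinRoot_C (r : R) : toAdjoinRoot R g (C r) = AdjoinRoot.of _ r :=
  eval₂_C _ _ _

@[simp]
theorem toAdjoinRoot_T_one : toAdjoinRoot R g (T 1) = AdjoinRoot.root _ := by
  simp [toAdjoinRoot]

theorem toAdjoinRoot_pow_eq_zero : toAdjoinRoot R g ((T 1 + 2 + T (-1)) ^ g) = 0 := by
  have hroot := AdjoinRoot.isUnit_root_of_isUnit (2 * g) (isUnit_one (M := R)).neg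
  refine (hroot.pow g).mul_right_eq_zero.mp ?_
  calc AdjoinRoot.root _ ^ g * toAdjoinRoot R g ((T 1 + 2 + T (-1)) ^ g)
      = toAdjoinRoot R g ((T 1 + 1) ^ 2) ^ g := by
        rw [T_one_add_one_sq, ← toAdjoinRoot_T_one, ← map_pow, ← map_mul, ← mul_pow,
          map_pow]
    _ = (AdjoinRoot.root _ - AdjoinRoot.of _ (-1)) ^ (2 * g) := by simp [pow_mul]
    _ = 0 := AdjoinRoot.root_sub_of_pow_eq_zero _ _

variable (R g)

noncomputable def quotientToAdjoinRoot :
    R[T;T⁻¹] ⧸ Ideal.span {(T 1 + 2 + T (-1) : R[T;T⁻¹]) ^ g} →+*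
      AdjoinRoot ((X - Polynomial.C (-1 : R)) ^ (2 * g)) :=
  Ideal.Quotient.lift _ (toAdjoinRoot R g) fun _ h ↦ by
    obtain ⟨c, rfl⟩ := Ideal.mem_span_singleton'.mp h
    rw [map_mul, toAdjoinRoot_pow_eq_zero, mul_zero]

theorem eval₂_mk_T_one_eq_zero :
    ((X - Polynomial.C (-1 : R)) ^ (2 * g)).eval₂
      ((Ideal.Quotient.mk (Ideal.span {(T 1 + 2 + T (-1) : R[T;T⁻¹]) ^ g})).comp C)
      (Ideal.Quotient.mk _ (T 1)) = 0 := by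
  have hu : Ideal.Quotient.mk (Ideal.span {(T 1 + 2 + T (-1) : R[T;T⁻¹]) ^ g})
      ((T 1 + 2 + T (-1)) ^ g) = 0 :=
    Ideal.Quotient.eq_zero_iff_mem.mpr (Ideal.mem_span_singleton_self _)
  calc _ = Ideal.Quotient.mk _ (((T 1 + 1 : R[T;T⁻¹]) ^ 2) ^ g) := by
        simp [pow_mul, Polynomial.eval₂_pow]
    _ = 0 := by rw [T_one_add_one_sq, mul_pow, map_mul, hu, mul_zero]

noncomputable def adjoinRootToQuotient :
    AdjoinRoot ((X - Polynomial.C (-1 : R)) ^ (2 * g)) →+*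
      R[T;T⁻¹] ⧸ Ideal.span {(T 1 + 2 + T (-1) : R[T;T⁻¹]) ^ g} :=
  AdjoinRoot.lift _ _ (eval₂_mk_T_one_eq_zero R g)

theorem adjoinRootToQuotient_comp_quotientToAdjoinRoot :
    (adjoinRootToQuotient R g).comp (quotientToAdjoinRoot R g) = RingHom.id _ := by
  refine Ideal.Quotient.ringHom_ext (ringHom_ext (fun r ↦ ?_) ?_)
  · simp [quotientToAdjoinRoot, adjoinRootToQuotient]
  · simp [quotientToAdjoinRoot, adjoinRootToQuotient]

theorem quotientToAdjoinRoot_injective : Function.Injective (quotientToAdjoinRoot R g) :=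
  Function.LeftInverse.injective (g := adjoinRootToQuotient R g)
    (RingHom.congr_fun (adjoinRootToQuotient_comp_quotientToAdjoinRoot R g))

end LaurentPolynomial

/-- Let `g ≥ 1` and let `R` be the quotient of the Laurent polynomial ring `ℤ[t,t⁻¹]` by the
principal ideal generated by `(t + 2 + t⁻¹)^g`. If `P ∈ R` satisfies `P·P = d·P` for some nonzero
integer `d`, then `P = 0` or `P = d·1` in `R`. -/
theorem statement0 (g : ℕ) (hg : 1 ≤ g) (d : ℤ) (hd : d ≠ 0)
    (P : LaurentPolynomial ℤ ⧸
        Ideal.span {(T 1 + 2 + T (-1) : LaurentPolynomial ℤ) ^ g})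
    (h : P * P = (d : LaurentPolynomial ℤ ⧸
        Ideal.span {(T 1 + 2 + T (-1) : LaurentPolynomial ℤ) ^ g}) * P) :
    P = 0 ∨ P = (d : LaurentPolynomial ℤ ⧸
        Ideal.span {(T 1 + 2 + T (-1) : LaurentPolynomial ℤ) ^ g}) := by
  have := ((monic_X_sub_C (-1 : ℤ)).pow (2 * g)).isAddTorsionFree_adjoinRoot
  have hroot : ((X - Polynomial.C (-1 : ℤ)) ^ (2 * g)).eval₂ (RingHom.id ℤ) (-1) = 0 := by
    rw [Polynomial.eval₂_pow, Polynomial.eval₂_sub, eval₂_X, Polynomial.eval₂_C, RingHom.id_apply,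
      sub_self, zero_pow (by omega)]
  have hQ := congrArg (quotientToAdjoinRoot ℤ g) h
  rw [map_mul, map_mul, map_intCast] at hQ
  have hinj := quotientToAdjoinRoot_injective ℤ g
  rcases eq_zero_or_eq_intCast_of_mul_self_eq_intCast_mul (AdjoinRoot.lift _ _ hroot)
    (fun _ ↦ AdjoinRoot.isNilpotent_of_lift_id_eq_zero hroot) hd hQ with h0 | hd'
  · exact .inl (hinj (by rw [h0, map_zero]))
  · exact .inr (hinj (by rw [hd', map_intCast]))
end

section
/- Let g ≥ 1 and let R = ℤ[X]/(X^{2g}). If p ∈ R and d is a nonzero integer such that p·(p − d·1) = 0 in R, then p = 0 or p = d·1 (where d·1 denotes the image of the integer d in R). -/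
open Polynomial

/-- Key lemma: if `X^n ∣ q*(q - C d)` in `ℤ[X]` with `d ≠ 0` and `q.coeff 0 = 0`,
then `X^n ∣ q`. -/
lemma aux_dvd (n : ℕ) (d : ℤ) (hd : d ≠ 0) (q : Polynomial ℤ)
    (hc : q.coeff 0 = 0) (hdvd : (X : Polynomial ℤ) ^ n ∣ q * (q - C d)) :
    (X : Polynomial ℤ) ^ n ∣ q := by
  refine (Polynomial.prime_X (R := ℤ)).pow_dvd_of_dvd_mul_right n ?_ hdvd
  rw [Polynomial.X_dvd_iff]
  simp [hc, hd]

/-- Let `g ≥ 1` and let `R = ℤ[X]/(X^{2g})`. If `p ∈ R` and `d` is a nonzero integer such that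
`p·(p − d·1) = 0` in `R`, then `p = 0` or `p = d·1`. -/
theorem statement2 (g : ℕ) (hg : 1 ≤ g) (d : ℤ) (hd : d ≠ 0)
    (p : Polynomial ℤ ⧸ Ideal.span {(X : Polynomial ℤ) ^ (2 * g)})
    (h : p * (p - (d : Polynomial ℤ ⧸ Ideal.span {(X : Polynomial ℤ) ^ (2 * g)})) = 0) :
    p = 0 ∨ p = (d : Polynomial ℤ ⧸ Ideal.span {(X : Polynomial ℤ) ^ (2 * g)}) := by
  obtain ⟨q, rfl⟩ := Ideal.Quotient.mk_surjective p
  have hcast : ((d : Polynomial ℤ ⧸ Ideal.span {(X : Polynomial ℤ) ^ (2 * g)}))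
      = Ideal.Quotient.mk _ (C d) := by
    simp [map_intCast]
  rw [hcast] at h ⊢
  rw [← map_sub, ← map_mul, Ideal.Quotient.eq_zero_iff_dvd] at h
  have h' : (X : Polynomial ℤ) ^ (2 * g) ∣ q * (q - C d) := h
  -- constant term analysis
  have hc : q.coeff 0 * (q.coeff 0 - d) = 0 := by
    have := Polynomial.X_dvd_iff.mp
      (dvd_trans (dvd_pow_self X (by omega : 2 * g ≠ 0)) h')
    simpa [coeff_sub, mul_comm] using this
  rcases mul_eq_zero.mp hc with hc0 | hc0
  · left
    rw [Ideal.Quotient.eq_zero_iff_dvd]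
    exact aux_dvd _ d hd q hc0 h'
  · right
    rw [Ideal.Quotient.eq, ← Ideal.neg_mem_iff, neg_sub, Ideal.mem_span_singleton]
    have hc0' : (C d - q).coeff 0 = 0 := by
      simp [coeff_sub]; omega
    have h'' : (X : Polynomial ℤ) ^ (2 * g) ∣ (C d - q) * ((C d - q) - C d) := by
      have he : (C d - q) * ((C d - q) - C d) = q * (q - C d) := by ring
      rw [he]; exact h'
    exact aux_dvd _ d hd _ hc0' h''
end
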